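/- arXiv:2503.22301 — 5 statements merged into one kernel-verified Lean document; each statement's English description precedes it below -/
import Mathlib

section
/- For every real number x, the deformed, parametrized B-generalized logistic kernel G_{q,β} satisfies ∫_{-∞}^{∞} G_{q,β}(x) dx = 1; that is, G_{q,β} is a density function on ℝ. -/
open MeasureTheory Real Filter
open Topology

noncomputable def nu (B q β x : ℝ) : ℝ := 1 / (1 + q * B ^ (-(β * x)))

noncomputable def G (B q β x : ℝ) : ℝ := (nu B q β (x + 1) - nu B q β (x - 1)) / 2

noncomputable def Psi (B q β x : ℝ) : ℝ := (G B q β x + G B (1 / q) β x) / 2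

noncomputable def modCont (f : ℝ → ℝ) (θ : ℝ) : ℝ :=
  sSup {d : ℝ | ∃ x y : ℝ, |x - y| ≤ θ ∧ d = |f x - f y|}

noncomputable def supNorm (f : ℝ → ℝ) : ℝ := ⨆ x : ℝ, |f x|

noncomputable def opA (B q β : ℝ) (n : ℕ) (f : ℝ → ℝ) (x : ℝ) : ℝ :=
  ∫ v : ℝ, f (v / n) * Psi B q β (n * x - v)

noncomputable def opAStar (B q β : ℝ) (n : ℕ) (f : ℝ → ℝ) (x : ℝ) : ℝ :=
  (n : ℝ) * ∫ v : ℝ, (∫ h in (v / n)..((v + 1) / n), f h) * Psi B q β (n * x - v)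

noncomputable def opABar (B q β : ℝ) (r : ℕ) (w : ℕ → ℝ) (n : ℕ) (f : ℝ → ℝ) (x : ℝ) : ℝ :=
  ∫ v : ℝ, (∑ s ∈ Finset.Icc 1 r, w s * f (v / n + (s : ℝ) / ((n : ℝ) * (r : ℝ)))) *
    Psi B q β (n * x - v)

/-- `G_{q,β}` is a density function on ℝ: its integral equals 1. -/
theorem G_integral_eq_one (B q β : ℝ) (hB : 1 < B) (hq : 0 < q) (hβ : 0 < β) :
    ∫ x : ℝ, G B q β x = 1 := by
  have hB0 : (0 : ℝ) < B := by linarith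
  set c : ℝ := β * Real.log B with hc_def
  have hlogB : 0 < Real.log B := Real.log_pos hB
  have hc : 0 < c := mul_pos hβ hlogB
  -- rewrite nu in terms of exp
  have hnu : ∀ x : ℝ, nu B q β x = 1 / (1 + q * Real.exp (-(c * x))) := by
    intro x
    unfold nu
    rw [Real.rpow_def_of_pos hB0]
    congr 3
    rw [hc_def]; ring
  -- the antiderivative
  set A : ℝ → ℝ := fun x => Real.log (1 + Real.exp (c * x) / q) / c with hA_def
  set H : ℝ → ℝ := fun x => (A (x + 1) - A (x - 1)) / 2 with hH_def
  have hApos : ∀ x : ℝ, 0 < 1 + Real.exp (c * x) / q := by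
    intro x; positivity
  have hA : ∀ x : ℝ, HasDerivAt A (nu B q β x) x := by
    intro x
    have h1 : HasDerivAt (fun y : ℝ => c * y) c x := by
      simpa using (hasDerivAt_id x).const_mul c
    have h2 := (((h1.exp.div_const q).const_add 1).log (ne_of_gt (hApos x))).div_const c
    refine h2.congr_deriv ?_
    rw [hnu x]
    have hE : 0 < Real.exp (c * x) := Real.exp_pos _
    rw [Real.exp_neg]
    field_simp
    ring
  have hH : ∀ x : ℝ, HasDerivAt H (G B q β x) x := by
    intro x
    have p1 : HasDerivAt (fun y : ℝ => A (y + 1)) (nu B q β (x + 1)) x := by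
      exact ((hA (x + 1)).comp x ((hasDerivAt_id x).add_const 1)).congr_deriv (mul_one _)
    have p2 : HasDerivAt (fun y : ℝ => A (y - 1)) (nu B q β (x - 1)) x := by
      exact ((hA (x - 1)).comp x ((hasDerivAt_id x).sub_const 1)).congr_deriv (mul_one _)
    exact (p1.sub p2).div_const 2
  -- nonnegativity of G
  have hmono : ∀ x y : ℝ, x ≤ y → nu B q β x ≤ nu B q β y := by
    intro x y hxy
    rw [hnu x, hnu y]
    have he : Real.exp (-(c * y)) ≤ Real.exp (-(c * x)) :=
      Real.exp_le_exp.2 (by nlinarith)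
    apply one_div_le_one_div_of_le
    · positivity
    · nlinarith
  have hpos : ∀ x : ℝ, 0 ≤ G B q β x := by
    intro x
    unfold G
    have := hmono (x - 1) (x + 1) (by linarith)
    linarith
  -- limit at -∞
  have hAbot : Tendsto A atBot (𝓝 0) := by
    have t1 : Tendsto (fun x : ℝ => c * x) atBot atBot :=
      Tendsto.const_mul_atBot hc tendsto_id
    have t2 : Tendsto (fun x : ℝ => Real.exp (c * x)) atBot (𝓝 0) :=
      Real.tendsto_exp_atBot.comp t1
    have t3 : Tendsto (fun x : ℝ => 1 + Real.exp (c * x) / q) atBot (𝓝 1) := by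
      have := (t2.div_const q).const_add (1 : ℝ)
      simpa using this
    have t4 : Tendsto (fun x : ℝ => Real.log (1 + Real.exp (c * x) / q)) atBot (𝓝 0) := by
      have := (Real.continuousAt_log (by norm_num : (1:ℝ) ≠ 0)).tendsto.comp t3
      simpa [Function.comp_def] using this
    have := t4.div_const c
    simpa using this
  have hbot : Tendsto H atBot (𝓝 0) := by
    have t1 : Tendsto (fun x : ℝ => A (x + 1)) atBot (𝓝 0) :=
      hAbot.comp (tendsto_atBot_add_const_right _ 1 tendsto_id)
    have t2 : Tendsto (fun x : ℝ => A (x - 1)) atBot (𝓝 0) :=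
      hAbot.comp (tendsto_atBot_add_const_right _ (-1) tendsto_id)
    have := (t1.sub t2).div_const 2
    simpa using this
  -- limit at +∞ : rewrite A
  have hAeq : ∀ x : ℝ, A x = x - Real.log q / c
      + Real.log (1 + q * Real.exp (-(c * x))) / c := by
    intro x
    have hE : 0 < Real.exp (c * x) := Real.exp_pos _
    have hEE : Real.exp (c * x) * Real.exp (-(c * x)) = 1 := by
      rw [← Real.exp_add]; simp
    have key : 1 + Real.exp (c * x) / q
        = (Real.exp (c * x) / q) * (1 + q * Real.exp (-(c * x))) := by
      field_simp
      nlinarith [hEE]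
    have hM : 0 < 1 + q * Real.exp (-(c * x)) := by positivity
    have : Real.log (1 + Real.exp (c * x) / q)
        = c * x - Real.log q + Real.log (1 + q * Real.exp (-(c * x))) := by
      rw [key, Real.log_mul (by positivity) (ne_of_gt hM),
        Real.log_div (ne_of_gt hE) (ne_of_gt hq), Real.log_exp]
    simp only [hA_def]
    rw [this]
    field_simp
  have hMtop : Tendsto (fun x : ℝ => Real.log (1 + q * Real.exp (-(c * x))) / c)
      atTop (𝓝 0) := by
    have t1 : Tendsto (fun x : ℝ => -(c * x)) atTop atBot := by
      have : Tendsto (fun x : ℝ => c * x) atTop atTop :=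
        Tendsto.const_mul_atTop hc tendsto_id
      exact tendsto_neg_atBot_iff.2 this
    have t2 : Tendsto (fun x : ℝ => Real.exp (-(c * x))) atTop (𝓝 0) :=
      Real.tendsto_exp_atBot.comp t1
    have t3 : Tendsto (fun x : ℝ => 1 + q * Real.exp (-(c * x))) atTop (𝓝 1) := by
      have := (t2.const_mul q).const_add (1 : ℝ)
      simpa using this
    have t4 := (Real.continuousAt_log (by norm_num : (1:ℝ) ≠ 0)).tendsto.comp t3
    have := t4.div_const c
    simpa using this
  have htop : Tendsto H atTop (𝓝 1) := by
    have hHid : ∀ x : ℝ, H x = 1 +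
        (Real.log (1 + q * Real.exp (-(c * (x + 1)))) / c
          - Real.log (1 + q * Real.exp (-(c * (x - 1)))) / c) / 2 := by
      intro x
      simp only [hH_def]
      rw [hAeq (x + 1), hAeq (x - 1)]
      ring
    have m1 : Tendsto (fun x : ℝ => Real.log (1 + q * Real.exp (-(c * (x + 1)))) / c)
        atTop (𝓝 0) :=
      hMtop.comp (tendsto_atTop_add_const_right _ 1 tendsto_id)
    have m2 : Tendsto (fun x : ℝ => Real.log (1 + q * Real.exp (-(c * (x - 1)))) / c)
        atTop (𝓝 0) :=
      hMtop.comp (tendsto_atTop_add_const_right _ (-1) tendsto_id)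
    have := ((m1.sub m2).div_const 2).const_add (1 : ℝ)
    refine Tendsto.congr (fun x => (hHid x).symm) ?_
    simpa using this
  -- integrability on (0, ∞)
  have hIoi : IntegrableOn (G B q β) (Set.Ioi (0 : ℝ)) :=
    integrableOn_Ioi_deriv_of_nonneg' (fun x _ => hH x) (fun x hx => hpos x) htop
  -- integrability on (-∞, 0) via reflection
  have hK : ∀ x : ℝ, HasDerivAt (fun y : ℝ => -H (-y)) (G B q β (-x)) x := by
    intro x
    have h1 : HasDerivAt (fun y : ℝ => H (-y)) (G B q β (-x) * (-1)) x :=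
      (hH (-x)).comp x (hasDerivAt_neg x)
    have := h1.neg
    exact this.congr_deriv (by ring)
  have hKtop : Tendsto (fun y : ℝ => -H (-y)) atTop (𝓝 0) := by
    have := (hbot.comp tendsto_neg_atTop_atBot).neg
    simpa using this
  have hIoi' : IntegrableOn (fun x : ℝ => G B q β (-x)) (Set.Ioi (0 : ℝ)) :=
    integrableOn_Ioi_deriv_of_nonneg' (fun x _ => hK x) (fun x hx => hpos _) hKtop
  have hIio : IntegrableOn (G B q β) (Set.Iio (0 : ℝ)) := by
    have hmp := (Measure.measurePreserving_neg (volume : Measure ℝ)).integrableOn_comp_preimage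
      (Homeomorph.neg ℝ).measurableEmbedding (f := G B q β) (s := Set.Iio (0 : ℝ))
    apply hmp.1
    have hpre : (Neg.neg : ℝ → ℝ) ⁻¹' Set.Iio (0 : ℝ) = Set.Ioi (0 : ℝ) := by
      ext x; simp
    rw [hpre]
    exact hIoi'
  have hInt : Integrable (G B q β) := by
    rw [← integrableOn_univ, ← Set.Iio_union_Ici (a := (0 : ℝ))]
    exact hIio.union ((integrableOn_Ici_iff_integrableOn_Ioi (f := G B q β) (b := 0) enorm_ne_top).2 hIoi)
  have := integral_of_hasDerivAt_of_tendsto hH hInt hbot htop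
  rw [this]
  norm_num
end

section
/- The function G_{q,β} attains its global maximum at the point x = (log_B q)/β, and the maximum value is G_{q,β}((log_B q)/β) = (B^β − 1)/(2(B^β + 1)); in particular G_{q,β}(x) ≤ (B^β − 1)/(2(B^β + 1)) for all x ∈ ℝ. -/
open MeasureTheory Real Filter

/-- `G_{q,β}` attains its global maximum at `(log_B q)/β`, with value
`(B^β − 1)/(2(B^β + 1))`. -/
theorem G_global_max (B q β : ℝ) (hB : 1 < B) (hq : 0 < q) (hβ : 0 < β) :
    G B q β (Real.logb B q / β) = (B ^ β - 1) / (2 * (B ^ β + 1)) ∧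
    ∀ x : ℝ, G B q β x ≤ (B ^ β - 1) / (2 * (B ^ β + 1)) := by
  have hB0 : (0:ℝ) < B := lt_trans one_pos hB
  have hc1 : 1 < B ^ β := (Real.one_lt_rpow_iff_of_pos hB0).mpr (Or.inl ⟨hB, hβ⟩)
  have hc0 : (0:ℝ) < B ^ β := lt_trans one_pos hc1
  have hG : ∀ x : ℝ, G B q β x =
      ((B ^ β) / ((B ^ β) + q * B ^ (-(β*x))) - 1/(1 + (q * B ^ (-(β*x))) * B ^ β)) / 2 := by
    intro x
    have ht0 : 0 < q * B ^ (-(β*x)) := by positivity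
    have h1 : B ^ (-(β*(x+1))) = B ^ (-(β*x)) / B ^ β := by
      rw [← Real.rpow_sub hB0]; congr 1; ring
    have h2 : B ^ (-(β*(x-1))) = B ^ (-(β*x)) * B ^ β := by
      rw [← Real.rpow_add hB0]; congr 1; ring
    simp only [G, nu, h1, h2]
    have hd1 : (0:ℝ) < 1 + q * (B ^ (-(β*x)) / B ^ β) := by positivity
    have hd2 : (0:ℝ) < 1 + q * (B ^ (-(β*x)) * B ^ β) := by positivity
    have hd3 : (0:ℝ) < (B ^ β) + q * B ^ (-(β*x)) := by positivity
    have hd4 : (0:ℝ) < 1 + (q * B ^ (-(β*x))) * B ^ β := by positivity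
    field_simp
  have key : ∀ t : ℝ, 0 < t →
      ((B ^ β) / ((B ^ β) + t) - 1/(1 + t * B ^ β)) / 2 ≤ (B ^ β - 1) / (2 * (B ^ β + 1)) := by
    intro t ht
    have hd1 : (0:ℝ) < (B ^ β) + t := by positivity
    have hd2 : (0:ℝ) < 1 + t * B ^ β := by positivity
    rw [div_le_div_iff₀ (by norm_num) (by positivity)]
    have hsq := sq_nonneg (t - 1)
    have h := mul_pos hd1 hd2
    rw [div_sub_div _ _ hd1.ne' hd2.ne', div_mul_eq_mul_div, div_le_iff₀ h]
    nlinarith [mul_pos ht hc0, mul_nonneg (mul_nonneg hsq hc0.le) hc0.le, mul_nonneg hsq hc0.le]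
  constructor
  · rw [hG]
    have hx : q * B ^ (-(β * (Real.logb B q / β))) = 1 := by
      rw [show β * (Real.logb B q / β) = Real.logb B q by field_simp]
      rw [Real.rpow_neg hB0.le, Real.rpow_logb hB0 hB.ne' hq]
      field_simp
    rw [hx]
    have h1 : (0:ℝ) < B ^ β + 1 := by positivity
    field_simp
    ring
  · intro x
    rw [hG]
    exact key _ (by positivity)
end

section
/- Let 0 < α < 1 and n ∈ ℕ with n^{1−α} > 2. Then for every x ∈ ℝ, ∫_{{v ∈ ℝ : |nx − v| ≥ n^{1−α}}} Ψ(nx − v) dv < (q + 1/q) / B^{β(n^{1−α} − 1)}. -/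
open MeasureTheory Real Filter

/-!
`Ψ` is even (because `ν_{q,β}(-x) = 1 - ν_{1/q,β}(x)`), so the tail integral is `2 ∫_T^∞ Ψ`
with `T = n^{1-α}`. For a continuous nondecreasing `f ≤ 1`, the integral
`∫_T^M (f(t+1) - f(t-1)) dt` telescopes to `∫_{M-1}^{M+1} f - ∫_{T-1}^{T+1} f`, which is at most
`∫_{T-1}^{T+1} (1 - f)`. For the logistic `ν_{q,β}` one has
`1 - ν_{q,β}(s) < q B^{-βs} ≤ q B^{-β(T-1)}` on `[T-1, T+1]`, whence
`∫_T^∞ G_{q,β} < q B^{-β(T-1)}`; adding the same bound for `1/q` gives the claim.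
-/

open Set

section ShiftDifference

variable {f : ℝ → ℝ} {C : ℝ}

theorem intervalIntegral_sub_shift (hf : Continuous f) (a b : ℝ) :
    ∫ t in a..b, (f (t + 1) - f (t - 1)) =
      (∫ s in (b - 1)..(b + 1), f s) - ∫ s in (a - 1)..(a + 1), f s := by
  rw [intervalIntegral.integral_sub
      ((by fun_prop : Continuous fun t => f (t + 1)).intervalIntegrable _ _)
      ((by fun_prop : Continuous fun t => f (t - 1)).intervalIntegrable _ _),
    intervalIntegral.integral_comp_add_right f, intervalIntegral.integral_comp_sub_right f,
    intervalIntegral.integral_interval_sub_interval_comm' (hf.intervalIntegrable _ _)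
      (hf.intervalIntegrable _ _) (hf.intervalIntegrable _ _)]

theorem intervalIntegral_sub_shift_le (hf : Continuous f) (hC : ∀ x, f x ≤ C) (a b : ℝ) :
    ∫ t in a..b, (f (t + 1) - f (t - 1)) ≤ ∫ s in (a - 1)..(a + 1), (C - f s) := by
  have hwindow : ∫ s in (b - 1)..(b + 1), f s ≤ 2 * C := by
    have := intervalIntegral.integral_mono_on (μ := volume) (g := fun _ => C)
      (by linarith : b - 1 ≤ b + 1) (hf.intervalIntegrable _ _) intervalIntegrable_const
      fun s _ => hC s
    simpa [intervalIntegral.integral_const, show b + 1 - (b - 1) = 2 by ring] using this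
  rw [intervalIntegral_sub_shift hf, intervalIntegral.integral_sub intervalIntegrable_const
    (hf.intervalIntegrable _ _), intervalIntegral.integral_const, smul_eq_mul,
    show a + 1 - (a - 1) = 2 by ring]
  linarith

theorem integrableOn_Ioi_sub_shift (hf : Continuous f) (hmono : Monotone f)
    (hC : ∀ x, f x ≤ C) (a : ℝ) :
    IntegrableOn (fun t => f (t + 1) - f (t - 1)) (Ioi a) := by
  have hnorm : (fun t => ‖f (t + 1) - f (t - 1)‖) = fun t => f (t + 1) - f (t - 1) :=
    funext fun t => Real.norm_of_nonneg (sub_nonneg.2 (hmono (by linarith)))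
  refine integrableOn_Ioi_of_intervalIntegral_norm_bounded (∫ s in (a - 1)..(a + 1), (C - f s)) a
    (fun _ => (by fun_prop : Continuous fun t => f (t + 1) - f (t - 1)).integrableOn_Ioc)
    tendsto_id (Eventually.of_forall fun b => ?_)
  rw [hnorm]
  exact intervalIntegral_sub_shift_le hf hC a b

theorem integral_Ioi_sub_shift_le (hf : Continuous f) (hmono : Monotone f)
    (hC : ∀ x, f x ≤ C) (a : ℝ) :
    ∫ t in Ioi a, (f (t + 1) - f (t - 1)) ≤ ∫ s in (a - 1)..(a + 1), (C - f s) :=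
  le_of_tendsto
    (intervalIntegral_tendsto_integral_Ioi a (integrableOn_Ioi_sub_shift hf hmono hC a) tendsto_id)
    (Eventually.of_forall fun b => intervalIntegral_sub_shift_le hf hC a b)

end ShiftDifference

theorem Function.Even.setIntegral_le_abs_sub {f : ℝ → ℝ} (hf : Function.Even f) {T : ℝ}
    (hT : 0 < T) (c : ℝ) :
    ∫ v in {v : ℝ | T ≤ |c - v|}, f (c - v) = 2 * ∫ t in Ioi T, f t := by
  have hf_abs : ∀ t, f |t| = f t := fun t => by
    rcases abs_choice t with h | h <;> simp only [h, hf t]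
  calc ∫ v in {v : ℝ | T ≤ |c - v|}, f (c - v)
      = ∫ v, (Ici T).indicator f |c - v| := by
        rw [← integral_indicator (measurableSet_le measurable_const (by fun_prop))]
        congr 1 with v
        by_cases hv : T ≤ |c - v| <;> simp [indicator, hv, hf_abs]
    _ = ∫ t, (Ici T).indicator f |t| :=
        integral_sub_left_eq_self (fun t => (Ici T).indicator f |t|) volume c
    _ = 2 * ∫ t in Ioi 0, (Ici T).indicator f t := integral_comp_abs
    _ = 2 * ∫ t in Ioi T, f t := by
        rw [setIntegral_indicator measurableSet_Ici,
          inter_eq_right.2 (Ici_subset_Ioi.2 hT), integral_Ici_eq_integral_Ioi]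

section Logistic

variable {B q β : ℝ}

theorem nu_le_one (hB : 0 ≤ B) (hq : 0 ≤ q) (x : ℝ) : nu B q β x ≤ 1 := by
  unfold nu
  rw [div_le_one (by positivity)]
  have : 0 ≤ q * B ^ (-(β * x)) := by positivity
  linarith

theorem continuous_nu (hB : 0 < B) (hq : 0 ≤ q) : Continuous (nu B q β) := by
  unfold nu
  exact continuous_const.div (by fun_prop (disch := positivity)) fun x => by positivity

theorem monotone_nu (hB : 1 ≤ B) (hq : 0 ≤ q) (hβ : 0 ≤ β) : Monotone (nu B q β) := by
  intro x y hxy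
  unfold nu
  have hpow : B ^ (-(β * y)) ≤ B ^ (-(β * x)) :=
    Real.rpow_le_rpow_of_exponent_le hB (by nlinarith)
  gcongr

theorem one_sub_nu_lt (hB : 1 < B) (hq : 0 < q) (hβ : 0 ≤ β) {x y : ℝ} (hyx : y ≤ x) :
    1 - nu B q β x < q * B ^ (-(β * y)) := by
  have hpow : B ^ (-(β * x)) ≤ B ^ (-(β * y)) :=
    Real.rpow_le_rpow_of_exponent_le hB.le (by nlinarith)
  have ha : 0 < q * B ^ (-(β * x)) := by positivity
  have hsub : 1 - nu B q β x = q * B ^ (-(β * x)) / (1 + q * B ^ (-(β * x))) := by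
    unfold nu; field_simp; ring
  rw [hsub, div_lt_iff₀ (by positivity)]
  nlinarith [mul_le_mul_of_nonneg_left hpow hq.le]

theorem nu_neg (hB : 0 < B) (hq : 0 < q) (x : ℝ) : nu B q β (-x) = 1 - nu B (1 / q) β x := by
  have hpow : B ^ (-(β * -x)) = (B ^ (-(β * x)))⁻¹ := by
    rw [← Real.rpow_neg hB.le]; ring_nf
  have : 0 < B ^ (-(β * x)) := by positivity
  unfold nu
  rw [hpow]
  field_simp
  ring

theorem G_neg (hB : 0 < B) (hq : 0 < q) (t : ℝ) : G B q β (-t) = G B (1 / q) β t := by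
  unfold G
  rw [show -t + 1 = -(t - 1) by ring, show -t - 1 = -(t + 1) by ring, nu_neg hB hq, nu_neg hB hq]
  ring

theorem even_Psi (hB : 0 < B) (hq : 0 < q) : Function.Even (Psi B q β) := fun t => by
  unfold Psi
  rw [G_neg hB hq, G_neg hB (one_div_pos.2 hq), one_div_one_div, add_comm]

theorem integrableOn_Ioi_G (hB : 1 < B) (hq : 0 < q) (hβ : 0 ≤ β) (T : ℝ) :
    IntegrableOn (G B q β) (Ioi T) :=
  (integrableOn_Ioi_sub_shift (continuous_nu (by linarith) hq.le) (monotone_nu hB.le hq.le hβ)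
    (nu_le_one (by linarith) hq.le) T).div_const 2

theorem integral_Ioi_G_lt (hB : 1 < B) (hq : 0 < q) (hβ : 0 ≤ β) (T : ℝ) :
    ∫ t in Ioi T, G B q β t < q * B ^ (-(β * (T - 1))) := by
  have hcont := continuous_nu (β := β) (zero_lt_one.trans hB) hq.le
  have hwindow :
      ∫ s in (T - 1)..(T + 1), (1 - nu B q β s) < q * (2 * B ^ (-(β * (T - 1)))) := by
    have := intervalIntegral.integral_lt_integral_of_continuousOn_of_le_of_exists_lt
      (by linarith : T - 1 < T + 1) (by fun_prop) continuousOn_const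
      (fun s hs => (one_sub_nu_lt hB hq hβ hs.1.le).le)
      ⟨T - 1, left_mem_Icc.2 (by linarith : T - 1 ≤ T + 1), one_sub_nu_lt hB hq hβ le_rfl⟩
    simpa [intervalIntegral.integral_const, show T + 1 - (T - 1) = 2 by ring] using this
  have hshift := integral_Ioi_sub_shift_le hcont (monotone_nu hB.le hq.le hβ)
    (nu_le_one (by linarith) hq.le) T
  simp only [G, integral_div]
  linarith

end Logistic

theorem Psi_tail_integral_lt_general (B q β α : ℝ) (hB : 1 < B) (hq : 0 < q) (hβ : 0 < β)
    (n : ℕ) (hn : 2 < (n : ℝ) ^ (1 - α)) (x : ℝ) :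
    ∫ v in {v : ℝ | (n : ℝ) ^ (1 - α) ≤ |(n : ℝ) * x - v|}, Psi B q β ((n : ℝ) * x - v) <
      (q + 1 / q) / B ^ (β * ((n : ℝ) ^ (1 - α) - 1)) := by
  set T := (n : ℝ) ^ (1 - α)
  have hq' : 0 < 1 / q := one_div_pos.2 hq
  have hPsi : ∫ t in Ioi T, Psi B q β t =
      ((∫ t in Ioi T, G B q β t) + ∫ t in Ioi T, G B (1 / q) β t) / 2 := by
    rw [← integral_add (integrableOn_Ioi_G hB hq hβ.le T) (integrableOn_Ioi_G hB hq' hβ.le T),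
      ← integral_div]
    rfl
  rw [(even_Psi (by linarith) hq).setIntegral_le_abs_sub (by linarith), hPsi,
    div_eq_mul_inv (q + 1 / q), ← Real.rpow_neg (by linarith)]
  have hG := integral_Ioi_G_lt hB hq hβ.le T
  have hG' := integral_Ioi_G_lt hB hq' hβ.le T
  linarith

/-- tail estimate for `Ψ`. -/
theorem Psi_tail_integral_lt (B q β α : ℝ) (hB : 1 < B) (hq : 0 < q) (hβ : 0 < β)
    (hα0 : 0 < α) (hα1 : α < 1) (n : ℕ) (hn : 2 < (n : ℝ) ^ (1 - α)) (x : ℝ) :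
    ∫ v in {v : ℝ | (n : ℝ) ^ (1 - α) ≤ |(n : ℝ) * x - v|}, Psi B q β ((n : ℝ) * x - v) <
      (q + 1 / q) / B ^ (β * ((n : ℝ) ^ (1 - α) - 1)) :=
  Psi_tail_integral_lt_general B q β α hB hq hβ n hn x
end

section
/- For every x ≥ 1 one has Ψ(x) < (1/2)(q + 1/q)·β·(ln B)·B^{−β(x−1)}. -/
/-!
With `C = B^{-β(x-1)}` and `A = B^{-β(x+1)} = C B^{-2β}`, one has
`2 G_{q,β}(x) = 1/(1 + qA) - 1/(1 + qC) = q(C - A)/((1 + qA)(1 + qC)) < q(C - A)`,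
and `C - A = C (1 - e^{-2β ln B}) < 2β (ln B) C`. So `G_{q,β}(x) < q β (ln B) C`;
averaging this bound for `q` and `1/q` gives the bound for `Ψ`.
-/

open MeasureTheory Real Filter

lemma one_div_one_add_mul_sub_lt {q a c : ℝ} (hq : 0 < q) (ha : 0 ≤ a) (hac : a < c) :
    1 / (1 + q * a) - 1 / (1 + q * c) < q * (c - a) := by
  have hqa : 0 ≤ q * a := mul_nonneg hq.le ha
  have hqc : 0 < q * c := mul_pos hq (ha.trans_lt hac)
  have hgap : 0 < q * (c - a) := mul_pos hq (sub_pos.mpr hac)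
  have hden : 1 < (1 + q * a) * (1 + q * c) := by nlinarith
  rw [div_sub_div _ _ (by positivity) (by positivity), div_lt_iff₀ (by positivity)]
  nlinarith

lemma one_sub_rpow_neg_lt_mul_log {B t : ℝ} (hB : 1 < B) (ht : 0 < t) :
    1 - B ^ (-t) < t * Real.log B := by
  have hexp := Real.one_sub_lt_exp_neg (mul_pos ht (Real.log_pos hB)).ne'
  rw [Real.rpow_def_of_pos (by linarith), show Real.log B * -t = -(t * Real.log B) by ring]
  linarith

lemma G_lt_mul_rpow (B q β x : ℝ) (hB : 1 < B) (hq : 0 < q) (hβ : 0 < β) :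
    G B q β x < q * β * Real.log B * B ^ (-(β * (x - 1))) := by
  set C := B ^ (-(β * (x - 1)))
  set D := B ^ (-(2 * β))
  have hshift : B ^ (-(β * (x + 1))) = C * D := by
    rw [← Real.rpow_add (by linarith)]; ring_nf
  have hC : 0 < C := by positivity
  have hD1 : D < 1 := Real.rpow_lt_one_of_one_lt_of_neg hB (by linarith)
  have hdecay : C - C * D < 2 * β * Real.log B * C := by
    have := one_sub_rpow_neg_lt_mul_log hB (by linarith : 0 < 2 * β)
    nlinarith
  have hnu := one_div_one_add_mul_sub_lt hq (by positivity) (by nlinarith : C * D < C)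
  simp only [G, nu, hshift]
  nlinarith

/-- pointwise exponential bound for `Ψ` on `[1, ∞)`. -/
theorem Psi_lt_exponential_bound (B q β : ℝ) (hB : 1 < B) (hq : 0 < q) (hβ : 0 < β) :
    ∀ x : ℝ, 1 ≤ x →
      Psi B q β x < (1 / 2) * (q + 1 / q) * β * Real.log B * B ^ (-(β * (x - 1))) := by
  intro x _
  have hG := G_lt_mul_rpow B q β x hB hq hβ
  have hG' := G_lt_mul_rpow B (1 / q) β x hB (one_div_pos.mpr hq) hβ
  simp only [Psi]
  linarith
end

section
/- Let 0 < α < 1 and n ∈ ℕ with n^{1−α} > 2, and let f : ℝ → ℝ be continuous and bounded. Then for every x ∈ ℝ, |A_n^*(f)(x) − f(x)| ≤ ω(f, 1/n + 1/n^α) + 2(q + 1/q)‖f‖_∞ / B^{β(n^{1−α} − 1)}, and hence ‖A_n^*(f) − f‖_∞ is bounded by the same quantity. Consequently, if f is in addition uniformly continuous, then A_n^*(f) → f uniformly on ℝ as n → ∞. -/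
open MeasureTheory Real Filter

open Set Topology

set_option linter.unusedSectionVars false




noncomputable def ephi (q c x : ℝ) : ℝ := 1 / (1 + q * Real.exp (-(c * x)))

section ephi
variable {q c : ℝ} (hq : 0 < q) (hc : 0 < c)
include hq

lemma ephi_denom_pos (x : ℝ) : 0 < 1 + q * Real.exp (-(c * x)) := by positivity

lemma ephi_pos (x : ℝ) : 0 < ephi q c x := by
  unfold ephi; positivity

lemma ephi_le_one (x : ℝ) : ephi q c x ≤ 1 := by
  unfold ephi
  rw [div_le_one (ephi_denom_pos hq x)]
  nlinarith [Real.exp_pos (-(c * x))]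

include hc in
lemma ephi_mono : Monotone (ephi q c) := by
  intro x y hxy
  unfold ephi
  apply one_div_le_one_div_of_le (ephi_denom_pos hq y)
  have : Real.exp (-(c * y)) ≤ Real.exp (-(c * x)) := by
    apply Real.exp_le_exp.2; nlinarith
  nlinarith

lemma one_sub_ephi_le (x : ℝ) : 1 - ephi q c x ≤ q * Real.exp (-(c * x)) := by
  set t := q * Real.exp (-(c * x)) with ht
  have htpos : 0 < t := by positivity
  have : (1 : ℝ) - 1 / (1 + t) = t / (1 + t) := by field_simp; ring
  unfold ephi
  rw [← ht, this]
  exact div_le_self htpos.le (by linarith)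

lemma ephi_le (x : ℝ) : ephi q c x ≤ q⁻¹ * Real.exp (c * x) := by
  have htpos : 0 < q * Real.exp (-(c * x)) := by positivity
  have h1 : ephi q c x ≤ 1 / (q * Real.exp (-(c * x))) :=
    one_div_le_one_div_of_le htpos (by nlinarith)
  calc ephi q c x ≤ 1 / (q * Real.exp (-(c * x))) := h1
    _ = q⁻¹ * Real.exp (c * x) := by
        rw [Real.exp_neg]; field_simp

lemma ephi_continuous : Continuous (ephi q c) := by
  apply Continuous.div continuous_const
  · continuity
  · exact fun x => ne_of_gt (ephi_denom_pos hq x)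

end ephi

section nu
variable {B q β : ℝ} (hB : 1 < B) (hq : 0 < q) (hβ : 0 < β)
include hB

lemma nu_eq (x : ℝ) : nu B q β x = ephi q (β * Real.log B) x := by
  unfold nu ephi
  rw [Real.rpow_def_of_pos (by linarith)]
  congr 3
  ring

lemma nu_eq' : nu B q β = ephi q (β * Real.log B) := funext (nu_eq hB)

include hβ in
lemma c_pos : 0 < β * Real.log B := mul_pos hβ (Real.log_pos hB)

end nu



section trans

lemma aux_mp_add (d : ℝ) : MeasurePreserving (fun x : ℝ => x + d) volume volume :=
  measurePreserving_add_right volume d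

lemma aux_emb_add (d : ℝ) : MeasurableEmbedding (fun x : ℝ => x + d) :=
  (Homeomorph.addRight d).measurableEmbedding

lemma aux_mp_sub (a : ℝ) : MeasurePreserving (fun x : ℝ => a - x) volume volume :=
  Measure.measurePreserving_sub_left volume a

lemma aux_emb_sub (a : ℝ) : MeasurableEmbedding (fun x : ℝ => a - x) :=
  (Homeomorph.subLeft a).measurableEmbedding

lemma setIntegral_add_right (g : ℝ → ℝ) (d : ℝ) (s : Set ℝ) :
    ∫ x in (fun x : ℝ => x + d) ⁻¹' s, g (x + d) = ∫ x in s, g x :=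
  (aux_mp_add d).setIntegral_preimage_emb (aux_emb_add d) g s

lemma integrableOn_add_right {g : ℝ → ℝ} {s : Set ℝ} (h : IntegrableOn g s) (d : ℝ) :
    IntegrableOn (fun x => g (x + d)) ((fun x : ℝ => x + d) ⁻¹' s) :=
  ((aux_mp_add d).integrableOn_comp_preimage (aux_emb_add d)).2 h

lemma preimage_add_Ioi (d T : ℝ) : (fun x : ℝ => x + d) ⁻¹' (Ioi T) = Ioi (T - d) := by
  ext x; simp [lt_sub_iff_add_lt, sub_lt_iff_lt_add]

lemma preimage_add_Iic (d T : ℝ) : (fun x : ℝ => x + d) ⁻¹' (Iic T) = Iic (T - d) := by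
  ext x; simp [le_sub_iff_add_le]

end trans

section Gsec
variable {B q β : ℝ} (hB : 1 < B) (hq : 0 < q) (hβ : 0 < β)
include hB hq hβ

lemma nu_continuous : Continuous (nu B q β) := by
  rw [nu_eq' hB]; exact ephi_continuous hq

lemma G_continuous : Continuous (G B q β) := by
  unfold G
  exact (((nu_continuous hB hq hβ).comp (by continuity)).sub
    ((nu_continuous hB hq hβ).comp (by continuity))).div_const 2

lemma G_nonneg (x : ℝ) : 0 ≤ G B q β x := by
  unfold G
  have := ephi_mono hq (c_pos hB hβ) (show x - 1 ≤ x + 1 by linarith)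
  rw [nu_eq hB, nu_eq hB]
  linarith

lemma integrableOn_one_sub_nu (a : ℝ) :
    IntegrableOn (fun x => 1 - nu B q β x) (Ioi a) := by
  set c := β * Real.log B with hcdef
  have hc : 0 < c := c_pos hB hβ
  have hint : IntegrableOn (fun x => q * Real.exp (-c * x)) (Ioi a) :=
    (exp_neg_integrableOn_Ioi a hc).const_mul q
  apply Integrable.mono' hint
  · exact ((continuous_const.sub (nu_continuous hB hq hβ)).aestronglyMeasurable).restrict
  · filter_upwards with x
    rw [Real.norm_eq_abs, abs_of_nonneg (by
      rw [nu_eq hB]; linarith [ephi_le_one hq (c := c) x]), nu_eq hB]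
    have := one_sub_ephi_le hq (c := c) x
    calc 1 - ephi q c x ≤ q * Real.exp (-(c * x)) := this
      _ = q * Real.exp (-c * x) := by ring_nf

lemma integrableOn_nu (a : ℝ) : IntegrableOn (nu B q β) (Iic a) := by
  set c := β * Real.log B with hcdef
  have hc : 0 < c := c_pos hB hβ
  have hint : IntegrableOn (fun x => q⁻¹ * Real.exp (c * x)) (Iic a) := by
    have h0 : IntegrableOn (fun x => Real.exp (-c * x)) (Ioi (-a)) :=
      exp_neg_integrableOn_Ioi (-a) hc
    have h1 : IntegrableOn (fun x => Real.exp (-c * (-x))) (Iic a) := by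
      rw [integrableOn_Iic_iff_integrableOn_Iio]
      have := (Measure.measurePreserving_neg (volume : Measure ℝ)).integrableOn_comp_preimage
        (Homeomorph.neg ℝ).measurableEmbedding (f := fun x => Real.exp (-c * x)) (s := Ioi (-a))
      rw [show (Neg.neg ⁻¹' Ioi (-a) : Set ℝ) = Iio a from ?_] at this
      · exact this.2 h0
      · ext x
        simp only [Set.mem_preimage, Set.mem_Ioi, Set.mem_Iio]
        constructor <;> intro h <;> linarith
    have h2 : (fun x => Real.exp (-c * (-x))) = fun x => Real.exp (c * x) := by
      funext x; ring_nf
    rw [h2] at h1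
    exact h1.const_mul _
  apply Integrable.mono' hint
  · exact ((nu_continuous hB hq hβ).aestronglyMeasurable).restrict
  · filter_upwards with x
    rw [Real.norm_eq_abs, abs_of_nonneg (by rw [nu_eq hB]; exact (ephi_pos hq x).le), nu_eq hB]
    exact ephi_le hq x

end Gsec



section Gint
variable {B q β : ℝ} (hB : 1 < B) (hq : 0 < q) (hβ : 0 < β)
include hB hq hβ

omit hB hq hβ in
lemma trans_Ioi_sub (g : ℝ → ℝ) (T : ℝ) :
    ∫ x in Ioi T, g (x - 1) = ∫ x in Ioi (T - 1), g x := by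
  have h := setIntegral_add_right g (-1) (Ioi (T - 1))
  rw [preimage_add_Ioi, show T - 1 - (-1) = T by ring] at h
  simpa [sub_eq_add_neg] using h

omit hB hq hβ in
lemma trans_Ioi_add (g : ℝ → ℝ) (T : ℝ) :
    ∫ x in Ioi T, g (x + 1) = ∫ x in Ioi (T + 1), g x := by
  have h := setIntegral_add_right g 1 (Ioi (T + 1))
  rwa [preimage_add_Ioi, add_sub_cancel_right] at h

omit hB hq hβ in
lemma trans_Iic_sub (g : ℝ → ℝ) (T : ℝ) :
    ∫ x in Iic T, g (x - 1) = ∫ x in Iic (T - 1), g x := by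
  have h := setIntegral_add_right g (-1) (Iic (T - 1))
  rw [preimage_add_Iic, show T - 1 - (-1) = T by ring] at h
  simpa [sub_eq_add_neg] using h

omit hB hq hβ in
lemma trans_Iic_add (g : ℝ → ℝ) (T : ℝ) :
    ∫ x in Iic T, g (x + 1) = ∫ x in Iic (T + 1), g x := by
  have h := setIntegral_add_right g 1 (Iic (T + 1))
  rwa [preimage_add_Iic, add_sub_cancel_right] at h

lemma int_one_sub_nu_add (T : ℝ) :
    IntegrableOn (fun x : ℝ => 1 - nu B q β (x + 1)) (Ioi T) := by
  have h := integrableOn_add_right (integrableOn_one_sub_nu hB hq hβ (T + 1)) 1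
  rwa [preimage_add_Ioi, add_sub_cancel_right] at h

lemma int_one_sub_nu_sub (T : ℝ) :
    IntegrableOn (fun x : ℝ => 1 - nu B q β (x - 1)) (Ioi T) := by
  have h := integrableOn_add_right (integrableOn_one_sub_nu hB hq hβ (T - 1)) (-1)
  rw [preimage_add_Ioi, show T - 1 - (-1) = T by ring] at h
  simpa [sub_eq_add_neg] using h

lemma int_nu_add (T : ℝ) :
    IntegrableOn (fun x : ℝ => nu B q β (x + 1)) (Iic T) := by
  have h := integrableOn_add_right (integrableOn_nu hB hq hβ (T + 1)) 1
  rwa [preimage_add_Iic, add_sub_cancel_right] at h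

lemma int_nu_sub (T : ℝ) :
    IntegrableOn (fun x : ℝ => nu B q β (x - 1)) (Iic T) := by
  have h := integrableOn_add_right (integrableOn_nu hB hq hβ (T - 1)) (-1)
  rw [preimage_add_Iic, show T - 1 - (-1) = T by ring] at h
  simpa [sub_eq_add_neg] using h

lemma G_Ioi_eq (T : ℝ) :
    ∫ x in Ioi T, G B q β x = (1/2) * ∫ x in Ioc (T-1) (T+1), (1 - nu B q β x) := by
  have hm1 := int_one_sub_nu_add hB hq hβ T
  have hm2 := int_one_sub_nu_sub hB hq hβ T
  calc ∫ x in Ioi T, G B q β x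
      = ∫ x in Ioi T, ((1 - nu B q β (x-1)) - (1 - nu B q β (x+1))) / 2 := by
        apply setIntegral_congr_fun measurableSet_Ioi
        intro x _; unfold G; ring
    _ = ((∫ x in Ioi T, (1 - nu B q β (x-1))) - ∫ x in Ioi T, (1 - nu B q β (x+1))) / 2 := by
        rw [integral_div, integral_sub hm2 hm1]
    _ = ((∫ x in Ioi (T-1), (1 - nu B q β x)) - ∫ x in Ioi (T+1), (1 - nu B q β x)) / 2 := by
        rw [trans_Ioi_sub (fun x => 1 - nu B q β x), trans_Ioi_add (fun x => 1 - nu B q β x)]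
    _ = (1/2) * ∫ x in Ioc (T-1) (T+1), (1 - nu B q β x) := by
        have hsplit : Ioc (T-1) (T+1) ∪ Ioi (T+1) = Ioi (T-1) :=
          Ioc_union_Ioi_eq_Ioi (by linarith)
        have hdisj : Disjoint (Ioc (T-1) (T+1)) (Ioi (T+1)) :=
          Set.disjoint_left.mpr (fun x hx hx' => absurd hx.2 (not_le.mpr hx'))
        have hint1 : IntegrableOn (fun x => 1 - nu B q β x) (Ioc (T-1) (T+1)) :=
          (integrableOn_one_sub_nu hB hq hβ (T-1)).mono_set Ioc_subset_Ioi_self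
        have hint2 := integrableOn_one_sub_nu hB hq hβ (T+1)
        rw [← hsplit, setIntegral_union hdisj measurableSet_Ioi hint1 hint2]
        ring

lemma G_Iic_eq (T : ℝ) :
    ∫ x in Iic T, G B q β x = (1/2) * ∫ x in Ioc (T-1) (T+1), nu B q β x := by
  have hm1 := int_nu_add hB hq hβ T
  have hm2 := int_nu_sub hB hq hβ T
  calc ∫ x in Iic T, G B q β x
      = ∫ x in Iic T, (nu B q β (x+1) - nu B q β (x-1)) / 2 := by
        apply setIntegral_congr_fun measurableSet_Iic
        intro x _; rfl
    _ = ((∫ x in Iic T, nu B q β (x+1)) - ∫ x in Iic T, nu B q β (x-1)) / 2 := by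
        rw [integral_div, integral_sub hm1 hm2]
    _ = ((∫ x in Iic (T+1), nu B q β x) - ∫ x in Iic (T-1), nu B q β x) / 2 := by
        rw [trans_Iic_sub (nu B q β), trans_Iic_add (nu B q β)]
    _ = (1/2) * ∫ x in Ioc (T-1) (T+1), nu B q β x := by
        have hsplit : Iic (T-1) ∪ Ioc (T-1) (T+1) = Iic (T+1) :=
          Iic_union_Ioc_eq_Iic (by linarith)
        have hdisj : Disjoint (Iic (T-1)) (Ioc (T-1) (T+1)) :=
          Set.disjoint_left.mpr (fun x hx hx' => absurd hx'.1 (not_lt.mpr hx))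
        have hint1 := integrableOn_nu hB hq hβ (T-1)
        have hint2 : IntegrableOn (nu B q β) (Ioc (T-1) (T+1)) :=
          (integrableOn_nu hB hq hβ (T+1)).mono_set Ioc_subset_Iic_self
        rw [← hsplit, setIntegral_union hdisj measurableSet_Ioc hint1 hint2]
        ring

lemma G_integrable : Integrable (G B q β) := by
  rw [← integrableOn_univ, ← Iic_union_Ioi (a := (0:ℝ))]
  apply IntegrableOn.union
  · exact ((int_nu_add hB hq hβ 0).sub (int_nu_sub hB hq hβ 0)).div_const 2
  · have h := ((int_one_sub_nu_sub hB hq hβ 0).sub (int_one_sub_nu_add hB hq hβ 0)).div_const 2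
    apply h.congr
    filter_upwards with x
    show ((1 - nu B q β (x - 1)) - (1 - nu B q β (x + 1))) / 2 = G B q β x
    unfold G; ring

lemma G_integral_one : ∫ x, G B q β x = 1 := by
  have hI := intervalIntegral.integral_Iic_add_Ioi (b := (0:ℝ))
    ((G_integrable hB hq hβ).integrableOn) ((G_integrable hB hq hβ).integrableOn)
  rw [← hI, G_Iic_eq hB hq hβ 0, G_Ioi_eq hB hq hβ 0]
  have hint1 : IntegrableOn (nu B q β) (Ioc (0-1) (0+1)) :=
    (integrableOn_nu hB hq hβ (0+1)).mono_set Ioc_subset_Iic_self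
  have hint2 : IntegrableOn (fun x => 1 - nu B q β x) (Ioc (0-1) (0+1)) :=
    (integrableOn_one_sub_nu hB hq hβ (0-1)).mono_set Ioc_subset_Ioi_self
  have key : (∫ x in Ioc ((0:ℝ)-1) (0+1), nu B q β x)
      + (∫ x in Ioc ((0:ℝ)-1) (0+1), (1 - nu B q β x)) = 2 := by
    rw [← integral_add hint1 hint2]
    have : ∫ x in Ioc ((0:ℝ)-1) (0+1), (nu B q β x + (1 - nu B q β x))
        = ∫ x in Ioc ((0:ℝ)-1) (0+1), (1:ℝ) := by
      apply setIntegral_congr_fun measurableSet_Ioc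
      intro x _; ring
    rw [this, setIntegral_const, measureReal_def, Real.volume_Ioc, smul_eq_mul, mul_one]
    rw [ENNReal.toReal_ofReal (by norm_num)]
    norm_num
  set A := ∫ x in Ioc ((0:ℝ)-1) (0+1), nu B q β x with hA
  set C := ∫ x in Ioc ((0:ℝ)-1) (0+1), (1 - nu B q β x) with hC
  linarith

lemma G_tail_Ioi (T : ℝ) :
    ∫ x in Ioi T, G B q β x ≤ q * Real.exp (-(β * Real.log B * (T - 1))) := by
  set c := β * Real.log B with hcdef
  rw [G_Ioi_eq hB hq hβ T]
  have hmono : ∀ x ∈ Ioc (T-1) (T+1), 1 - nu B q β x ≤ 1 - nu B q β (T-1) := by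
    intro x hx
    have := ephi_mono hq (c_pos hB hβ) hx.1.le
    rw [nu_eq hB, nu_eq hB]
    linarith
  have hint : IntegrableOn (fun x => 1 - nu B q β x) (Ioc (T-1) (T+1)) :=
    (integrableOn_one_sub_nu hB hq hβ (T-1)).mono_set Ioc_subset_Ioi_self
  have hle : ∫ x in Ioc (T-1) (T+1), (1 - nu B q β x)
      ≤ ∫ _x in Ioc (T-1) (T+1), (1 - nu B q β (T-1)) := by
    apply setIntegral_mono_on hint _ measurableSet_Ioc hmono
    exact (integrableOn_const_iff).mpr (Or.inr (by rw [Real.volume_Ioc]; exact ENNReal.ofReal_lt_top))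
  have hconst : ∫ _x in Ioc (T-1) (T+1), (1 - nu B q β (T-1)) = 2 * (1 - nu B q β (T-1)) := by
    rw [setIntegral_const, measureReal_def, Real.volume_Ioc, smul_eq_mul,
      ENNReal.toReal_ofReal (by norm_num : (0:ℝ) ≤ T+1-(T-1))]
    norm_num
  have hbound : 1 - nu B q β (T-1) ≤ q * Real.exp (-(c * (T-1))) := by
    rw [nu_eq hB]; exact one_sub_ephi_le hq (T-1)
  calc (1/2) * ∫ x in Ioc (T-1) (T+1), (1 - nu B q β x)
      ≤ (1/2) * (2 * (1 - nu B q β (T-1))) := by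
        rw [← hconst]; linarith [hle]
    _ = 1 - nu B q β (T-1) := by ring
    _ ≤ q * Real.exp (-(c * (T-1))) := hbound

lemma G_tail_Iic (T : ℝ) :
    ∫ x in Iic (-T), G B q β x ≤ q⁻¹ * Real.exp (-(β * Real.log B * (T - 1))) := by
  set c := β * Real.log B with hcdef
  rw [G_Iic_eq hB hq hβ (-T)]
  have hmono : ∀ x ∈ Ioc (-T-1) (-T+1), nu B q β x ≤ nu B q β (-T+1) := by
    intro x hx
    have := ephi_mono hq (c_pos hB hβ) hx.2
    rw [nu_eq hB, nu_eq hB]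
    linarith
  have hint : IntegrableOn (nu B q β) (Ioc (-T-1) (-T+1)) :=
    (integrableOn_nu hB hq hβ (-T+1)).mono_set Ioc_subset_Iic_self
  have hle : ∫ x in Ioc (-T-1) (-T+1), nu B q β x
      ≤ ∫ _x in Ioc (-T-1) (-T+1), nu B q β (-T+1) := by
    apply setIntegral_mono_on hint _ measurableSet_Ioc hmono
    exact (integrableOn_const_iff).mpr (Or.inr (by rw [Real.volume_Ioc]; exact ENNReal.ofReal_lt_top))
  have hconst : ∫ _x in Ioc (-T-1) (-T+1), nu B q β (-T+1) = 2 * nu B q β (-T+1) := by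
    rw [setIntegral_const, measureReal_def, Real.volume_Ioc, smul_eq_mul,
      ENNReal.toReal_ofReal (by norm_num : (0:ℝ) ≤ -T+1-(-T-1))]
    norm_num
  have hbound : nu B q β (-T+1) ≤ q⁻¹ * Real.exp (-(c * (T-1))) := by
    rw [nu_eq hB]
    have := ephi_le hq (c := c) (-T+1)
    rwa [show c * (-T+1) = -(c * (T-1)) by ring] at this
  calc (1/2) * ∫ x in Ioc (-T-1) (-T+1), nu B q β x
      ≤ (1/2) * (2 * nu B q β (-T+1)) := by rw [← hconst]; linarith [hle]
    _ = nu B q β (-T+1) := by ring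
    _ ≤ q⁻¹ * Real.exp (-(c * (T-1))) := hbound

end Gint

section PsiSec
variable {B q β : ℝ} (hB : 1 < B) (hq : 0 < q) (hβ : 0 < β)
include hB hq hβ

lemma psi_nonneg (x : ℝ) : 0 ≤ Psi B q β x := by
  have h1 := G_nonneg hB hq hβ x
  have h2 := G_nonneg hB (show (0:ℝ) < 1/q by positivity) hβ x
  unfold Psi; linarith

lemma psi_continuous : Continuous (Psi B q β) := by
  unfold Psi
  exact ((G_continuous hB hq hβ).add
    (G_continuous hB (show (0:ℝ) < 1/q by positivity) hβ)).div_const 2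

lemma psi_integrable : Integrable (Psi B q β) := by
  have h := ((G_integrable hB hq hβ).add
    (G_integrable hB (show (0:ℝ) < 1/q by positivity) hβ)).div_const 2
  apply h.congr
  filter_upwards with x
  show (G B q β x + G B (1/q) β x) / 2 = Psi B q β x
  rfl

lemma psi_integral_one : ∫ x, Psi B q β x = 1 := by
  unfold Psi
  rw [integral_div, integral_add (G_integrable hB hq hβ)
    (G_integrable hB (show (0:ℝ) < 1/q by positivity) hβ),
    G_integral_one hB hq hβ, G_integral_one hB (show (0:ℝ) < 1/q by positivity) hβ]
  norm_num

lemma psi_tail (T : ℝ) (hT : 0 < T) :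
    ∫ u in {u : ℝ | T ≤ |u|}, Psi B q β u
      ≤ (q + 1/q) * Real.exp (-(β * Real.log B * (T - 1))) := by
  have hq' : (0:ℝ) < 1/q := by positivity
  have hset : {u : ℝ | T ≤ |u|} = Iic (-T) ∪ Ici T := by
    ext u
    simp only [mem_setOf_eq, le_abs, mem_union, mem_Iic, mem_Ici, le_neg]
    tauto
  have hdisj : Disjoint (Iic (-T)) (Ici T) := by
    apply Set.disjoint_left.mpr
    intro u hu hu'
    simp only [mem_Iic] at hu
    simp only [mem_Ici] at hu'
    linarith
  have hPI := psi_integrable hB hq hβ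
  rw [hset, setIntegral_union hdisj measurableSet_Ici hPI.integrableOn hPI.integrableOn,
    integral_Ici_eq_integral_Ioi]
  have split : ∀ s : Set ℝ, ∫ u in s, Psi B q β u
      = ((∫ u in s, G B q β u) + ∫ u in s, G B (1/q) β u) / 2 := by
    intro s
    unfold Psi
    rw [integral_div, integral_add (G_integrable hB hq hβ).integrableOn
      (G_integrable hB hq' hβ).integrableOn]
  rw [split, split]
  have h1 := G_tail_Ioi hB hq hβ T
  have h2 := G_tail_Ioi hB hq' hβ T
  have h3 := G_tail_Iic hB hq hβ T
  have h4 := G_tail_Iic hB hq' hβ T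
  have e1 : ((1:ℝ)/q)⁻¹ = q := by field_simp
  have e2 : q⁻¹ = 1/q := by rw [one_div]
  rw [e1] at h4
  rw [e2] at h3
  have hexp : (0:ℝ) < Real.exp (-(β * Real.log B * (T - 1))) := Real.exp_pos _
  linarith

end PsiSec



section ModSup
variable {f : ℝ → ℝ} {M θ : ℝ}

lemma modCont_bddAbove (hM : ∀ x, |f x| ≤ M) :
    BddAbove {d : ℝ | ∃ x y : ℝ, |x - y| ≤ θ ∧ d = |f x - f y|} := by
  refine ⟨2 * M, ?_⟩
  rintro d ⟨x, y, -, rfl⟩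
  have h1 := hM x; have h2 := hM y
  have : |f x - f y| ≤ |f x| + |f y| := by
    rw [sub_eq_add_neg]
    exact (abs_add_le _ _).trans (by rw [abs_neg])
  linarith

lemma abs_sub_le_modCont (hM : ∀ x, |f x| ≤ M) {x y : ℝ} (hxy : |x - y| ≤ θ) :
    |f x - f y| ≤ modCont f θ :=
  le_csSup (modCont_bddAbove hM) ⟨x, y, hxy, rfl⟩

lemma modCont_nonneg (hM : ∀ x, |f x| ≤ M) (hθ : 0 ≤ θ) : 0 ≤ modCont f θ := by
  have := abs_sub_le_modCont hM (x := 0) (y := 0) (by simpa using hθ)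
  simpa using this

lemma modCont_le {ε : ℝ} (hθ : 0 ≤ θ) (h : ∀ x y : ℝ, |x - y| ≤ θ → |f x - f y| ≤ ε) :
    modCont f θ ≤ ε := by
  have hne : Set.Nonempty {d : ℝ | ∃ x y : ℝ, |x - y| ≤ θ ∧ d = |f x - f y|} := by
    exact ⟨|f 0 - f 0|, 0, 0, by simpa using hθ, rfl⟩
  apply csSup_le hne
  rintro d ⟨x, y, hxy, rfl⟩
  exact h x y hxy

lemma le_supNorm (hM : ∀ x, |f x| ≤ M) (x : ℝ) : |f x| ≤ supNorm f :=
  le_ciSup ⟨M, by rintro d ⟨y, rfl⟩; exact hM y⟩ x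

lemma supNorm_nonneg (hM : ∀ x, |f x| ≤ M) : 0 ≤ supNorm f :=
  (abs_nonneg _).trans (le_supNorm hM 0)

lemma supNorm_le {C : ℝ} (h : ∀ x, |f x| ≤ C) : supNorm f ≤ C := ciSup_le h

end ModSup



set_option maxHeartbeats 1000000 in
lemma key_estimate {B q β α : ℝ} (hB : 1 < B) (hq : 0 < q) (hβ : 0 < β)
    (hα0 : 0 < α) (hα1 : α < 1) {f : ℝ → ℝ} (hf : Continuous f)
    {M : ℝ} (hM : ∀ x, |f x| ≤ M) (n : ℕ) (hn : 2 < (n : ℝ) ^ (1 - α)) (x : ℝ) :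
    |opAStar B q β n f x - f x| ≤
      modCont f (1 / (n : ℝ) + 1 / (n : ℝ) ^ α) +
        2 * (q + 1 / q) * M / B ^ (β * ((n : ℝ) ^ (1 - α) - 1)) := by
  have hn0 : n ≠ 0 := by
    rintro rfl
    rw [Nat.cast_zero, Real.zero_rpow (by linarith : 1 - α ≠ 0)] at hn
    linarith
  set N : ℝ := (n : ℝ) with hNdef
  have hN : (0 : ℝ) < N := by
    rw [hNdef]; exact_mod_cast Nat.pos_of_ne_zero hn0
  have hN' : N ≠ 0 := ne_of_gt hN
  set T : ℝ := N ^ (1 - α) with hTdef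
  have hT2 : 2 < T := hn
  have hT0 : 0 < T := by linarith
  have hNα : (0 : ℝ) < N ^ α := Real.rpow_pos_of_pos hN α
  set θ : ℝ := 1 / N + 1 / N ^ α with hθdef
  have hθ0 : 0 < θ := by rw [hθdef]; positivity
  set ω : ℝ := modCont f θ with hωdef
  have hω0 : 0 ≤ ω := modCont_nonneg hM hθ0.le
  have hM0 : 0 ≤ M := (abs_nonneg _).trans (hM 0)
  have hTN : T / N = 1 / N ^ α := by
    rw [hTdef, show (1 : ℝ) - α = 1 + -α by ring, Real.rpow_add hN, Real.rpow_one,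
      Real.rpow_neg hN.le]
    field_simp
  set c : ℝ := β * Real.log B with hcdef
  set Ψ' : ℝ → ℝ := fun v => Psi B q β (N * x - v) with hΨdef
  have hΨint : Integrable Ψ' :=
    ((aux_mp_sub (N * x)).integrable_comp_emb (aux_emb_sub (N * x))).2 (psi_integrable hB hq hβ)
  have hΨone : ∫ v, Ψ' v = 1 := by
    have h := (aux_mp_sub (N * x)).integral_comp (aux_emb_sub (N * x)) (Psi B q β)
    rw [show (∫ v, Ψ' v) = ∫ v, Psi B q β ((fun v : ℝ => N * x - v) v) from rfl, h,
      psi_integral_one hB hq hβ]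
  have hΨ0 : ∀ v, 0 ≤ Ψ' v := fun v => psi_nonneg hB hq hβ _
  set F : ℝ → ℝ := fun v => ∫ h in (v / N)..((v + 1) / N), f h with hFdef
  have hFeq : ∀ v, F v = (∫ t in (0 : ℝ)..((v + 1) / N), f t) - ∫ t in (0 : ℝ)..(v / N), f t := by
    intro v
    rw [intervalIntegral.integral_interval_sub_left (hf.intervalIntegrable _ _)
      (hf.intervalIntegrable _ _)]
  have hprim : Continuous fun y : ℝ => ∫ t in (0 : ℝ)..y, f t :=
    intervalIntegral.continuous_primitive (fun a b => hf.intervalIntegrable a b) 0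
  have hFcont : Continuous F := by
    have : F = fun v => (∫ t in (0 : ℝ)..((v + 1) / N), f t) - ∫ t in (0 : ℝ)..(v / N), f t :=
      funext hFeq
    rw [this]
    exact (hprim.comp (by continuity)).sub (hprim.comp (by continuity))
  have hstep : ∀ v : ℝ, (v + 1) / N - v / N = 1 / N := by
    intro v; field_simp; ring
  have hle : ∀ v : ℝ, v / N ≤ (v + 1) / N := by
    intro v; rw [div_le_div_iff₀ hN hN]; nlinarith
  have hFb : ∀ v, |F v| ≤ M * (1 / N) := by
    intro v
    have h := intervalIntegral.norm_integral_le_of_norm_le_const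
      (a := v / N) (b := (v + 1) / N) (C := M) (f := f)
      (fun t _ => by rw [Real.norm_eq_abs]; exact hM t)
    rw [Real.norm_eq_abs] at h
    rwa [hstep v, abs_of_nonneg (le_of_lt (one_div_pos.mpr hN))] at h
  set E : ℝ → ℝ := fun v => N * F v - f x with hEdef
  have hEcont : Continuous E := (continuous_const.mul hFcont).sub continuous_const
  have habs : ∀ a b : ℝ, |a - b| ≤ |a| + |b| := fun a b => by
    rw [sub_eq_add_neg]
    exact (abs_add_le _ _).trans (by rw [abs_neg])
  have hE2M : ∀ v, |E v| ≤ 2 * M := by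
    intro v
    have h1 := hFb v
    have h2 := hM x
    calc |E v| ≤ |N * F v| + |f x| := habs _ _
      _ = N * |F v| + |f x| := by rw [abs_mul, abs_of_nonneg hN.le]
      _ ≤ N * (M * (1 / N)) + M := by
          have := mul_le_mul_of_nonneg_left h1 hN.le
          linarith
      _ = 2 * M := by
          rw [show N * (M * (1 / N)) = M by field_simp]
          ring
  have hEω : ∀ v, |N * x - v| ≤ T → |E v| ≤ ω := by
    intro v hv
    have hEint : E v = N * ∫ h in (v / N)..((v + 1) / N), (f h - f x) := by
      rw [intervalIntegral.integral_sub (hf.intervalIntegrable _ _) intervalIntegrable_const,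
        intervalIntegral.integral_const, hstep v, smul_eq_mul]
      show N * F v - f x = N * (F v - 1 / N * f x)
      field_simp
      try ring
    have hbd : ∀ h ∈ Set.uIoc (v / N) ((v + 1) / N), ‖f h - f x‖ ≤ ω := by
      intro h hh
      rw [Set.uIoc_of_le (hle v)] at hh
      have hvx : |v / N - x| ≤ 1 / N ^ α := by
        have e1 : v / N - x = -((N * x - v) / N) := by field_simp; try ring
        rw [e1, abs_neg, abs_div, abs_of_nonneg hN.le, ← hTN]
        rw [div_le_div_iff₀ hN hN]
        nlinarith
      have hhv : |h - v / N| ≤ 1 / N := by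
        rw [abs_le]
        constructor
        · have := hh.1
          have h1N : 0 < 1 / N := by positivity
          linarith
        · have := hh.2
          have : h ≤ v / N + 1 / N := by
            have := hstep v; linarith [hh.2]
          linarith
      have hhx : |h - x| ≤ θ := by
        calc |h - x| = |(h - v / N) + (v / N - x)| := by ring_nf
          _ ≤ |h - v / N| + |v / N - x| := abs_add_le _ _
          _ ≤ 1 / N + 1 / N ^ α := add_le_add hhv hvx
          _ = θ := hθdef.symm
      rw [Real.norm_eq_abs]
      exact abs_sub_le_modCont hM hhx
    have h := intervalIntegral.norm_integral_le_of_norm_le_const hbd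
    rw [Real.norm_eq_abs, hstep v, abs_of_nonneg (by positivity : (0:ℝ) ≤ 1/N)] at h
    rw [hEint, abs_mul, abs_of_nonneg hN.le]
    calc N * |∫ h in (v / N)..((v + 1) / N), (f h - f x)| ≤ N * (ω * (1 / N)) := by
          exact mul_le_mul_of_nonneg_left h hN.le
      _ = ω := by field_simp
  set S : Set ℝ := (fun v : ℝ => N * x - v) ⁻¹' {u : ℝ | T ≤ |u|} with hSdef
  have hAmeas : MeasurableSet {u : ℝ | T ≤ |u|} :=
    measurableSet_le measurable_const continuous_abs.measurable
  have hSmeas : MeasurableSet S :=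
    hAmeas.preimage (continuous_const.sub continuous_id).measurable
  set bound : ℝ → ℝ := fun v => ω * Ψ' v + (2 * M) * S.indicator Ψ' v with hbdef
  have hbint : Integrable bound :=
    (hΨint.const_mul ω).add ((hΨint.indicator hSmeas).const_mul (2 * M))
  have hEΨint : Integrable (fun v => E v * Ψ' v) :=
    hΨint.bdd_mul hEcont.aestronglyMeasurable
      (Filter.Eventually.of_forall fun v => by rw [Real.norm_eq_abs]; exact hE2M v)
  have hNFΨint : Integrable (fun v => (N * F v) * Ψ' v) :=
    hΨint.bdd_mul (continuous_const.mul hFcont).aestronglyMeasurable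
      (Filter.Eventually.of_forall fun v => by
        rw [Real.norm_eq_abs, abs_mul, abs_of_nonneg hN.le]
        have := mul_le_mul_of_nonneg_left (hFb v) hN.le
        calc N * |F v| ≤ N * (M * (1 / N)) := this
          _ = M := by field_simp)
  have hfxΨint : Integrable (fun v => f x * Ψ' v) := hΨint.const_mul (f x)
  have h1 : opAStar B q β n f x = ∫ v, (N * F v) * Ψ' v := by
    show (n : ℝ) * ∫ v : ℝ, (∫ h in (v / (n:ℝ))..((v + 1) / (n:ℝ)), f h) * Psi B q β ((n:ℝ) * x - v)
      = ∫ v, (N * F v) * Ψ' v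
    rw [← hNdef, ← MeasureTheory.integral_const_mul]
    congr 1
    funext v
    rw [hΨdef, hFdef]
    ring
  have h3 : ∫ v, E v * Ψ' v = (∫ v, (N * F v) * Ψ' v) - ∫ v, f x * Ψ' v := by
    rw [← integral_sub hNFΨint hfxΨint]
    congr 1
    funext v
    rw [hEdef]
    ring
  have hdiff : opAStar B q β n f x - f x = ∫ v, E v * Ψ' v := by
    rw [h3, MeasureTheory.integral_const_mul, hΨone, mul_one, ← h1]
  have hpt : ∀ v, ‖E v * Ψ' v‖ ≤ bound v := by
    intro v
    rw [Real.norm_eq_abs, abs_mul, abs_of_nonneg (hΨ0 v)]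
    by_cases hvS : v ∈ S
    · rw [hbdef]
      simp only [Set.indicator_of_mem hvS]
      have h1 := hE2M v
      have h2 := hΨ0 v
      nlinarith [mul_nonneg hω0 (hΨ0 v)]
    · rw [hbdef]
      simp only [Set.indicator_of_notMem hvS, mul_zero, add_zero]
      have hvT : |N * x - v| ≤ T := by
        have : ¬ T ≤ |N * x - v| := hvS
        linarith [not_le.mp this]
      exact mul_le_mul_of_nonneg_right (hEω v hvT) (hΨ0 v)
  have hmain : |∫ v, E v * Ψ' v| ≤ ∫ v, bound v := by
    rw [← Real.norm_eq_abs]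
    exact norm_integral_le_of_norm_le hbint (Filter.Eventually.of_forall hpt)
  have hboundval : ∫ v, bound v ≤ ω + 2 * M * ((q + 1 / q) * Real.exp (-(c * (T - 1)))) := by
    have e : ∫ v, bound v = ω * (∫ v, Ψ' v) + (2 * M) * ∫ v, S.indicator Ψ' v := by
      simp only [hbdef]
      rw [integral_add (hΨint.const_mul ω) ((hΨint.indicator hSmeas).const_mul (2 * M)),
        MeasureTheory.integral_const_mul, MeasureTheory.integral_const_mul]
    rw [e, hΨone, mul_one, integral_indicator hSmeas]
    have hSint : ∫ v in S, Ψ' v = ∫ u in {u : ℝ | T ≤ |u|}, Psi B q β u :=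
      (aux_mp_sub (N * x)).setIntegral_preimage_emb (aux_emb_sub (N * x)) (Psi B q β) _
    rw [hSint]
    have htail := psi_tail hB hq hβ T hT0
    nlinarith [htail]
  have hBpow : B ^ (β * (T - 1)) = Real.exp (c * (T - 1)) := by
    rw [Real.rpow_def_of_pos (by linarith : (0 : ℝ) < B)]
    congr 1
    rw [hcdef]; ring
  have hfinal : 2 * (q + 1 / q) * M / B ^ (β * (T - 1))
      = 2 * M * ((q + 1 / q) * Real.exp (-(c * (T - 1)))) := by
    rw [hBpow, Real.exp_neg, div_eq_mul_inv]
    ring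
  rw [hdiff, hfinal]
  exact hmain.trans hboundval



/-- quantitative approximation by the Kantorovich operator `A_n^*`
and uniform convergence. -/
theorem opAStar_approx (B q β α : ℝ) (hB : 1 < B) (hq : 0 < q) (hβ : 0 < β)
    (hα0 : 0 < α) (hα1 : α < 1) (f : ℝ → ℝ) (hf : Continuous f)
    (hfb : ∃ M : ℝ, ∀ x : ℝ, |f x| ≤ M) :
    (∀ n : ℕ, 2 < (n : ℝ) ^ (1 - α) →
      (∀ x : ℝ, |opAStar B q β n f x - f x| ≤
          modCont f (1 / (n : ℝ) + 1 / (n : ℝ) ^ α) +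
            2 * (q + 1 / q) * supNorm f / B ^ (β * ((n : ℝ) ^ (1 - α) - 1))) ∧
      supNorm (fun x => opAStar B q β n f x - f x) ≤
        modCont f (1 / (n : ℝ) + 1 / (n : ℝ) ^ α) +
          2 * (q + 1 / q) * supNorm f / B ^ (β * ((n : ℝ) ^ (1 - α) - 1))) ∧
    (UniformContinuous f →
      TendstoUniformly (fun (n : ℕ) (x : ℝ) => opAStar B q β n f x) f atTop) := by
  obtain ⟨M₀, hM₀⟩ := hfb
  have hM : ∀ x, |f x| ≤ supNorm f := le_supNorm hM₀
  constructor
  · intro n hn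
    refine ⟨fun x => key_estimate hB hq hβ hα0 hα1 hf hM n hn x, ?_⟩
    exact supNorm_le (fun x => key_estimate hB hq hβ hα0 hα1 hf hM n hn x)
  · intro hUC
    rw [Metric.tendstoUniformly_iff]
    intro ε hε
    obtain ⟨δ, hδ0, hδ⟩ := Metric.uniformContinuous_iff.mp hUC (ε/4) (by linarith)
    have hTlim : Tendsto (fun n : ℕ => (n:ℝ)^(1-α)) atTop atTop :=
      (tendsto_rpow_atTop (by linarith : (0:ℝ) < 1 - α)).comp tendsto_natCast_atTop_atTop
    have hev1 : ∀ᶠ n : ℕ in atTop, 2 < (n:ℝ)^(1-α) := hTlim.eventually_gt_atTop 2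
    have hθnonneg : ∀ n : ℕ, (0:ℝ) ≤ 1/(n:ℝ) + 1/(n:ℝ)^α := by
      intro n
      have h1 : (0:ℝ) ≤ 1/(n:ℝ) := by positivity
      have h2 : (0:ℝ) ≤ (n:ℝ)^α := Real.rpow_nonneg (Nat.cast_nonneg n) α
      have h3 : (0:ℝ) ≤ 1/(n:ℝ)^α := by positivity
      linarith
    have hθlim : Tendsto (fun n : ℕ => 1/(n:ℝ) + 1/(n:ℝ)^α) atTop (𝓝 0) := by
      have l1 : Tendsto (fun n : ℕ => 1/(n:ℝ)) atTop (𝓝 0) :=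
        tendsto_one_div_atTop_nhds_zero_nat
      have l2 : Tendsto (fun n : ℕ => 1/(n:ℝ)^α) atTop (𝓝 0) := by
        simp only [one_div]
        exact Tendsto.inv_tendsto_atTop
          ((tendsto_rpow_atTop hα0).comp tendsto_natCast_atTop_atTop)
      simpa using l1.add l2
    have hev2 : ∀ᶠ n : ℕ in atTop, modCont f (1/(n:ℝ) + 1/(n:ℝ)^α) ≤ ε/4 := by
      filter_upwards [hθlim.eventually (gt_mem_nhds hδ0)] with n hn
      apply modCont_le (hθnonneg n)
      intro x y hxy
      have hd : dist x y < δ := lt_of_le_of_lt (by rw [Real.dist_eq]; exact hxy) hn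
      have := hδ hd
      rw [Real.dist_eq] at this
      linarith
    have htaillim : Tendsto
        (fun n : ℕ => 2*(q+1/q)*(supNorm f) / B^(β*((n:ℝ)^(1-α)-1))) atTop (𝓝 0) := by
      apply Tendsto.div_atTop tendsto_const_nhds
      have hexp : Tendsto (fun n : ℕ => β*((n:ℝ)^(1-α)-1)) atTop atTop := by
        apply Tendsto.const_mul_atTop hβ
        have := tendsto_atTop_add_const_right atTop (-1 : ℝ) hTlim
        simpa [sub_eq_add_neg] using this
      have hBexp : Tendsto (fun y : ℝ => B ^ y) atTop atTop := by
        have hlog : Tendsto (fun y : ℝ => Real.log B * y) atTop atTop :=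
          Tendsto.const_mul_atTop (Real.log_pos hB) tendsto_id
        have h : Tendsto (fun y : ℝ => Real.exp (Real.log B * y)) atTop atTop :=
          Real.tendsto_exp_atTop.comp hlog
        have h2 : (fun y : ℝ => B ^ y) = fun y => Real.exp (Real.log B * y) :=
          funext fun y => Real.rpow_def_of_pos (by linarith) y
        rw [h2]; exact h
      exact hBexp.comp hexp
    have hev3 : ∀ᶠ n : ℕ in atTop,
        2*(q+1/q)*(supNorm f) / B^(β*((n:ℝ)^(1-α)-1)) < ε/2 :=
      htaillim.eventually (gt_mem_nhds (by linarith))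
    filter_upwards [hev1, hev2, hev3] with n h1 h2 h3
    intro x
    rw [dist_comm, Real.dist_eq]
    calc |opAStar B q β n f x - f x|
        ≤ modCont f (1/(n:ℝ) + 1/(n:ℝ)^α)
          + 2*(q+1/q)*(supNorm f) / B^(β*((n:ℝ)^(1-α)-1)) :=
          key_estimate hB hq hβ hα0 hα1 hf hM n h1 x
      _ < ε := by linarith
end
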